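/- Let S be an additive commutative monoid generated by a subset S₀, G a group, and d ∈ ℕ. If f, g : S → G are polynomial maps of degree ≤ d which agree on the set {0} ∪ S₀^{≤ d}, where S₀^{≤ d} = { s₁ + s₂ + ⋯ + s_i : 1 ≤ i ≤ d, s₁,…,s_i ∈ S₀ }, then f = g on all of S. -/

import Mathlib

/-! Induction on `d`: for `a ∈ S₀` the left differences `t ↦ f (a + t) * (f t)⁻¹` and
`t ↦ g (a + t) * (g t)⁻¹` have degree `≤ d - 1` and agree at `0` and on `S₀^{≤ d-1}`
(because `a + S₀^{≤ d-1} ⊆ S₀^{≤ d}`), hence agree on the submonoid generated by `S₀`.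
Then `f (a + t) = (f (a + t) * (f t)⁻¹) * f t` propagates `f 0 = g 0` along the generators. -/

namespace PaperPoly

/-- `DegLE d f` means that `f : S → G` is a polynomial map of degree at most `d ∈ ℕ`:
the base case `DegLE 0 f` means `f` is constant, and `DegLE (d+1) f` means that for every
`s : S` both difference maps `L_s f : t ↦ f (s+t) * (f t)⁻¹` and
`R_s f : t ↦ (f t)⁻¹ * f (s+t)` satisfy `DegLE d`. -/
def DegLE {S : Type*} [AddCommSemigroup S] {G : Type*} [Group G] : ℕ → (S → G) → Prop
  | 0 => fun f => ∀ t t' : S, f t = f t'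
  | d + 1 => fun f => ∀ s : S,
      DegLE d (fun t => f (s + t) * (f t)⁻¹) ∧ DegLE d (fun t => (f t)⁻¹ * f (s + t))

/-- `f` is a polynomial map (of some finite degree). -/
def IsPoly {S : Type*} [AddCommSemigroup S] {G : Type*} [Group G] (f : S → G) : Prop :=
  ∃ d : ℕ, DegLE d f

section

variable {S : Type*} [AddCommMonoid S] {G : Type*} [Group G]

/-- The paper's `S₀^{≤ d}`. -/
def boundedSums (S₀ : Set S) (d : ℕ) : Set S :=
  {s | ∃ l : List S, l ≠ [] ∧ l.length ≤ d ∧ (∀ x ∈ l, x ∈ S₀) ∧ l.sum = s}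

variable {S₀ : Set S}

lemma mem_boundedSums_of_mem {d : ℕ} (hd : d ≠ 0) {a : S} (ha : a ∈ S₀) :
    a ∈ boundedSums S₀ d :=
  ⟨[a], List.cons_ne_nil _ _, by simpa using Nat.one_le_iff_ne_zero.mpr hd,
    by simpa using ha, List.sum_singleton⟩

lemma boundedSums_mono : Monotone (boundedSums S₀) := by
  rintro d e hde s ⟨l, hne, hlen, hl, rfl⟩
  exact ⟨l, hne, hlen.trans hde, hl, rfl⟩

lemma add_mem_boundedSums_succ {d : ℕ} {a s : S} (ha : a ∈ S₀) (hs : s ∈ boundedSums S₀ d) :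
    a + s ∈ boundedSums S₀ (d + 1) := by
  obtain ⟨l, -, hlen, hl, rfl⟩ := hs
  refine ⟨a :: l, List.cons_ne_nil _ _, by simpa using hlen, ?_, List.sum_cons⟩
  simpa [List.forall_mem_cons] using ⟨ha, hl⟩

lemma eqOn_closure_of_leftDiff_eqOn {f g : S → G} (h0 : f 0 = g 0)
    (hdiff : ∀ a ∈ S₀, ∀ t ∈ AddSubmonoid.closure S₀,
      f (a + t) * (f t)⁻¹ = g (a + t) * (g t)⁻¹) :
    Set.EqOn f g (AddSubmonoid.closure S₀) := by
  intro s hs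
  induction hs using AddSubmonoid.closure_induction_left with
  | zero => exact h0
  | add_left a ha t ht ih =>
    calc f (a + t) = (f (a + t) * (f t)⁻¹) * f t := by group
      _ = (g (a + t) * (g t)⁻¹) * g t := by rw [hdiff a ha t ht, ih]
      _ = g (a + t) := by group

theorem DegLE.eqOn_closure_of_eqOn_boundedSums {d : ℕ} {f g : S → G}
    (hf : DegLE d f) (hg : DegLE d g) (h0 : f 0 = g 0)
    (hS₀ : Set.EqOn f g (boundedSums S₀ d)) :
    Set.EqOn f g (AddSubmonoid.closure S₀) := by
  induction d generalizing f g with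
  | zero => exact fun s _ => (hf s 0).trans (h0.trans (hg 0 s))
  | succ d ih =>
    refine eqOn_closure_of_leftDiff_eqOn h0 fun a ha => ih (hf a).1 (hg a).1 ?_ ?_
    · simp only [add_zero, hS₀ (mem_boundedSums_of_mem d.succ_ne_zero ha), h0]
    · intro t ht
      simp only [hS₀ (add_mem_boundedSums_succ ha ht), hS₀ (boundedSums_mono d.le_succ ht)]

end

theorem polynomial_map_uniquely_determined {S : Type*} [AddCommMonoid S] {G : Type*}
    [Group G] (S₀ : Set S) (hgen : AddSubmonoid.closure S₀ = ⊤) (d : ℕ) (f g : S → G)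
    (hf : DegLE d f) (hg : DegLE d g) (h0 : f 0 = g 0)
    (hS₀ : ∀ s : S,
      (∃ l : List S, l ≠ [] ∧ l.length ≤ d ∧ (∀ x ∈ l, x ∈ S₀) ∧ l.sum = s) →
      f s = g s) :
    ∀ s : S, f s = g s := fun s =>
  hf.eqOn_closure_of_eqOn_boundedSums hg h0 (fun t ht => hS₀ t ht)
    (hgen ▸ AddSubmonoid.mem_top s)

end PaperPoly
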